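/- arXiv:1909.09364 — 3 statements merged into one kernel-verified Lean document; each statement's English description precedes it below -/
import Mathlib

section
/- Let M_κ be the multiplication operator by positive weights κ_λ on ℓ²(Λ), d with inf_λ d_λ > 0, α > 0. Then the map η ↦ (soft(η_λ, α d_λ)/κ_λ)_λ from ℓ²(Λ) to ℓ²(Λ) is continuous, even though the pseudoinverse M_κ⁺ (componentwise division by κ_λ) is discontinuous when inf κ_λ = 0. -/
/-!
Soft thresholding at level `α * d i ≥ α * c` kills every coordinate of modulus below `α * c`,
while an `ℓ²` sequence has only finitely many coordinates of modulus at least `α * c / 2`.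
Hence near any `η₀` the map only ever sees the same finitely many coordinates: it agrees locally
with a finite sum of continuous maps, on which dividing by the `κ i` is continuous.
-/

noncomputable def soft (η d : ℝ) : ℝ := Real.sign η * max 0 (|η| - d)

open scoped ENNReal
open Filter Topology

theorem soft_eq_zero_of_abs_le {x t : ℝ} (h : |x| ≤ t) : soft x t = 0 := by
  rw [soft, max_eq_left (sub_nonpos.mpr h), mul_zero]

theorem soft_eq_max_add_min {t : ℝ} (ht : 0 ≤ t) (x : ℝ) :
    soft x t = max 0 (x - t) + min 0 (x + t) := by
  rcases lt_trichotomy x 0 with hx | rfl | hx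
  · rw [soft, Real.sign_of_neg hx, abs_of_neg hx, max_eq_left (by linarith : x - t ≤ 0)]
    rcases le_total 0 (x + t) with h | h
    · rw [min_eq_left h, max_eq_left (by linarith)]; ring
    · rw [min_eq_right h, max_eq_right (by linarith)]; ring
  · simp [soft, ht]
  · rw [soft, Real.sign_of_pos hx, abs_of_pos hx, min_eq_left (by linarith : 0 ≤ x + t), one_mul,
      add_zero]

theorem continuous_soft {t : ℝ} (ht : 0 ≤ t) : Continuous (soft · t) := by
  simp_rw [soft_eq_max_add_min ht]
  fun_prop

section

variable {ι : Type*} {E F : ι → Type*} [∀ i, NormedAddCommGroup (E i)]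
  [∀ i, NormedAddCommGroup (F i)] {p : ℝ≥0∞}

theorem Memℓp.finite_setOf_le_norm (hp : 0 < p.toReal) {g : ∀ i, E i} (hg : Memℓp g p) {b : ℝ}
    (hb : 0 < b) : {i | b ≤ ‖g i‖}.Finite := by
  have hsmall : ∀ᶠ i in cofinite, ‖g i‖ ^ p.toReal < b ^ p.toReal :=
    (hg.summable hp).tendsto_cofinite_zero.eventually_lt_const (by positivity)
  exact (eventually_cofinite.mp hsmall).subset fun i hi =>
    not_lt.mpr (Real.rpow_le_rpow hb.le hi hp.le)

theorem Memℓp.comp_of_eq_zero_of_norm_lt (hp : 0 < p.toReal) {r : ℝ} (hr : 0 < r)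
    {f : ∀ i, E i → F i} (hf : ∀ i x, ‖x‖ < r → f i x = 0) {g : ∀ i, E i} (hg : Memℓp g p) :
    Memℓp (fun i => f i (g i)) p := by
  have hsupp : {i | f i (g i) ≠ 0} ⊆ {i | r ≤ ‖g i‖} := fun i hi => not_lt.mp (mt (hf i (g i)) hi)
  exact (memℓp_zero ((hg.finite_setOf_le_norm hp hr).subset hsupp)).of_exponent_ge zero_le

theorem lp.eq_sum_single_of_eq_zero [DecidableEq ι] (g : lp E p) (s : Finset ι)
    (hg : ∀ i ∉ s, g i = 0) :
    g = ∑ i ∈ s, lp.single p i (g i) := by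
  ext j
  simp only [lp.coeFn_sum, lp.coeFn_single, Finset.sum_apply, Finset.sum_pi_single]
  split_ifs with hj
  · rfl
  · exact hg j hj

theorem lp.continuous_mk_comp_of_eq_zero_of_norm_lt [Fact (1 ≤ p)] (hp : p ≠ ∞) {r : ℝ}
    (hr : 0 < r) {f : ∀ i, E i → F i} (hf : ∀ i, Continuous (f i))
    (hf₀ : ∀ i x, ‖x‖ < r → f i x = 0) (hmem : ∀ g : lp E p, Memℓp (fun i => f i (g i)) p) :
    Continuous fun g : lp E p => (⟨fun i => f i (g i), hmem g⟩ : lp F p) := by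
  classical
  have hp₀ : 0 < p.toReal := ENNReal.toReal_pos (zero_lt_one.trans_le Fact.out).ne' hp
  refine continuous_iff_continuousAt.mpr fun g₀ => ?_
  obtain ⟨S, hS⟩ : ∃ S : Finset ι, ∀ i ∉ S, ‖g₀ i‖ < r / 2 :=
    ⟨((lp.memℓp g₀).finite_setOf_le_norm hp₀ (half_pos hr)).toFinset,
      fun i hi => by simpa using hi⟩
  have hlocal : ∀ᶠ g : lp E p in 𝓝 g₀,
      (⟨fun i => f i (g i), hmem g⟩ : lp F p) = ∑ i ∈ S, lp.single p i (f i (g i)) := by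
    filter_upwards [Metric.ball_mem_nhds g₀ (half_pos hr)] with g hg
    refine lp.eq_sum_single_of_eq_zero _ S fun i hi => hf₀ i _ ?_
    have hgi : dist (g i) (g₀ i) ≤ r / 2 :=
      ((lp.lipschitzWith_one_eval p i).dist_le_mul g g₀).trans
        (by simpa using (Metric.mem_ball.mp hg).le)
    linarith [norm_le_norm_add_const_of_dist_le hgi, hS i hi]
  refine ContinuousAt.congr ?_ (hlocal.mono fun _ h => h.symm)
  exact (continuous_finsetSum S fun i _ => (lp.isometry_single i).continuous.comp
    ((hf i).comp (lp.lipschitzWith_one_eval p i).continuous)).continuousAt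

end

theorem soft_div_kappa_continuous_general {Λ : Type*}
    (κ d : Λ → ℝ) (c : ℝ) (hc : 0 < c) (hd : ∀ i, c ≤ d i)
    (α : ℝ) (hα : 0 < α) :
    ∃ T : lp (fun _ : Λ => ℝ) 2 → lp (fun _ : Λ => ℝ) 2,
      (∀ (η : lp (fun _ : Λ => ℝ) 2) (i : Λ), T η i = soft (η i) (α * d i) / κ i) ∧
      Continuous T := by
  have hαd (i : Λ) : α * c ≤ α * d i := mul_le_mul_of_nonneg_left (hd i) hα.le
  have hdead (i : Λ) (x : ℝ) (hx : ‖x‖ < α * c) : soft x (α * d i) / κ i = 0 := by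
    rw [soft_eq_zero_of_abs_le (hx.le.trans (hαd i)), zero_div]
  have hcont (i : Λ) : Continuous fun x => soft x (α * d i) / κ i :=
    (continuous_soft ((mul_pos hα hc).le.trans (hαd i))).div_const _
  have hmem (η : lp (fun _ : Λ => ℝ) 2) : Memℓp (fun i => soft (η i) (α * d i) / κ i) 2 :=
    (lp.memℓp η).comp_of_eq_zero_of_norm_lt (by norm_num) (mul_pos hα hc) hdead
  exact ⟨_, fun _ _ => rfl, lp.continuous_mk_comp_of_eq_zero_of_norm_lt ENNReal.ofNat_ne_top
    (mul_pos hα hc) hcont hdead hmem⟩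

theorem soft_div_kappa_continuous {Λ : Type*} [Countable Λ]
    (κ d : Λ → ℝ) (hκ : ∀ i, 0 < κ i) (c : ℝ) (hc : 0 < c) (hd : ∀ i, c ≤ d i)
    (α : ℝ) (hα : 0 < α) :
    ∃ T : lp (fun _ : Λ => ℝ) 2 → lp (fun _ : Λ => ℝ) 2,
      (∀ (η : lp (fun _ : Λ => ℝ) 2) (i : Λ), T η i = soft (η i) (α * d i) / κ i) ∧
      Continuous T :=
  soft_div_kappa_continuous_general κ d c hc hd α hα
end

section
/- Let A : X → Y be bounded linear with BFD (U, V, κ), κ_λ > 0, weights d with inf d_λ > 0, α > 0. Then the BFD soft-thresholding estimator B_α : Y → X, B_α(y) = Ū ∘ M_κ⁺ ∘ S_{αd} ∘ V*(y), is well defined and continuous on Y. -/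
/-!
Since `v i ∈ closure (range A)`, the coefficient `⟪y, v i⟫` only depends on the orthogonal
projection of `y` onto that closed subspace, so the upper frame bound makes `(⟪y, v i⟫)ᵢ`
square-summable, hence tending to zero, for every `y`. As the thresholds `α * d i` are bounded
below by `α * c > 0`, only finitely many terms of the series are nonzero. The frame bound also
bounds `‖v i‖` uniformly, so this finite set can be chosen locally uniformly in `y`: the series is
a locally finite sum of continuous functions.
-/

open RealInnerProductSpace

open Filter Topology Function

theorem soft_eq_zero_of_abs_le_s14 {η d : ℝ} (h : |η| ≤ d) : soft η d = 0 := by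
  rw [soft, max_eq_left (sub_nonpos.2 h), mul_zero]

theorem soft_eq_sub_max_min {d : ℝ} (hd : 0 ≤ d) (η : ℝ) :
    soft η d = η - max (-d) (min η d) := by
  rcases lt_trichotomy η 0 with h | rfl | h
  · rw [soft, Real.sign_of_neg h, abs_of_neg h]
    simp only [max_def, min_def]
    split_ifs <;> linarith
  · simp [soft, hd]
  · rw [soft, Real.sign_of_pos h, abs_of_pos h]
    simp only [max_def, min_def]
    split_ifs <;> linarith

theorem continuous_soft_s14 {d : ℝ} (hd : 0 ≤ d) : Continuous (soft · d) := by
  simp only [soft_eq_sub_max_min hd]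
  fun_prop

theorem tendsto_cofinite_zero_of_summable_sq {ι : Type*} {f : ι → ℝ}
    (hf : Summable fun i => f i ^ 2) : Tendsto f cofinite (𝓝 0) := by
  have h := hf.tendsto_cofinite_zero.sqrt
  simp only [Real.sqrt_sq_eq_abs, Real.sqrt_zero] at h
  exact (tendsto_zero_iff_abs_tendsto_zero f).2 h

section InnerProductSpace

variable {E ι : Type*} [NormedAddCommGroup E] [InnerProductSpace ℝ E]

theorem Submodule.summable_inner_sq_of_mem (K : Submodule ℝ E) [K.HasOrthogonalProjection]
    {v : ι → E} (hvK : ∀ i, v i ∈ K)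
    (hK : ∀ y ∈ K, Summable fun i => ⟪y, v i⟫ ^ 2) (y : E) :
    Summable fun i => ⟪y, v i⟫ ^ 2 := by
  have hproj : ∀ i, ⟪y, v i⟫ = ⟪K.starProjection y, v i⟫ := fun i => by
    rw [K.inner_starProjection_left_eq_right, K.starProjection_eq_self_iff.2 (hvK i)]
  simpa only [hproj] using hK _ (K.starProjection_apply_mem y)

theorem norm_le_sqrt_of_hasSum_inner_sq {v : ι → E} {B s : ℝ} (i : ι)
    (hs : HasSum (fun j => ⟪v i, v j⟫ ^ 2) s)
    (hsB : s ≤ B * ‖v i‖ ^ 2) : ‖v i‖ ≤ √B := by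
  rcases eq_or_ne (v i) 0 with h0 | h0
  · simp [h0]
  have hpos : 0 < ‖v i‖ ^ 2 := by positivity
  have hdiag : (‖v i‖ ^ 2) ^ 2 ≤ s := by
    simpa only [real_inner_self_eq_norm_sq] using le_hasSum hs i fun j _ => sq_nonneg _
  have hB : ‖v i‖ ^ 2 ≤ B := le_of_mul_le_mul_right (by nlinarith) hpos
  exact (Real.le_sqrt (norm_nonneg _) (hpos.le.trans hB)).2 hB

theorem locallyFinite_setOf_lt_abs_inner {v : ι → E} {M t : ℝ} (hM : ∀ i, ‖v i‖ ≤ M)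
    (hv : ∀ y, Tendsto (fun i => ⟪y, v i⟫) cofinite (𝓝 0)) (ht : 0 < t) :
    LocallyFinite fun i => {y : E | t < |⟪y, v i⟫|} := by
  intro y₀
  obtain ⟨r, hr, hMr⟩ := exists_pos_mul_lt (half_pos ht) M
  refine ⟨Metric.ball y₀ r, Metric.ball_mem_nhds y₀ hr, ?_⟩
  have hfin : {i | t / 2 ≤ |⟪y₀, v i⟫|}.Finite := by
    simpa only [Real.dist_0_eq_abs, not_lt] using
      eventually_cofinite.1 (Metric.tendsto_nhds.1 (hv y₀) _ (half_pos ht))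
  refine hfin.subset fun i ⟨y, hy, hyr⟩ => ?_
  have hclose : |⟪y, v i⟫ - ⟪y₀, v i⟫| ≤ r * M := by
    rw [← inner_sub_left]
    exact (abs_real_inner_le_norm _ _).trans
      (mul_le_mul (mem_ball_iff_norm.1 hyr).le (hM i) (norm_nonneg _) hr.le)
  have := abs_sub_abs_le_abs_sub ⟪y, v i⟫ ⟪y₀, v i⟫
  change t < |⟪y, v i⟫| at hy
  change t / 2 ≤ |⟪y₀, v i⟫|
  linarith

end InnerProductSpace

theorem bfd_soft_thresholding_wellDefined_continuous_general
    {X Y : Type*} [NormedAddCommGroup X] [InnerProductSpace ℝ X]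
    [NormedAddCommGroup Y] [InnerProductSpace ℝ Y] [CompleteSpace Y]
    {Λ : Type*}
    (A : X →L[ℝ] Y) (ubar : Λ → X) (v : Λ → Y) (κ : Λ → ℝ)
    -- (v_λ) is a frame of the closure of ran(A)
    (a' b' : ℝ)
    (hvmem : ∀ i, v i ∈ closure (Set.range A))
    (hv : ∀ y ∈ closure (Set.range A), ∃ s : ℝ, HasSum (fun i => ⟪y, v i⟫ ^ 2) s ∧
      a' * ‖y‖ ^ 2 ≤ s ∧ s ≤ b' * ‖y‖ ^ 2)
    (d : Λ → ℝ) (c : ℝ) (hc : 0 < c) (hd : ∀ i, c ≤ d i)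
    (α : ℝ) (hα : 0 < α) :
    ∃ B : Y → X,
      (∀ y : Y, HasSum (fun i => (soft ⟪y, v i⟫ (α * d i) / κ i) • ubar i) (B y)) ∧
      Continuous B := by
  let K : Submodule ℝ Y := (LinearMap.range (A : X →ₗ[ℝ] Y)).topologicalClosure
  have hK (z : Y) : z ∈ K ↔ z ∈ closure (Set.range A) := by
    rw [← SetLike.mem_coe, Submodule.topologicalClosure_coe, LinearMap.coe_range]
    rfl
  have hcoef (y : Y) : Tendsto (fun i => ⟪y, v i⟫) cofinite (𝓝 0) := by
    refine tendsto_cofinite_zero_of_summable_sq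
      (K.summable_inner_sq_of_mem (fun i => (hK _).2 (hvmem i)) (fun z hz => ?_) y)
    obtain ⟨s, hs, -⟩ := hv z ((hK z).1 hz)
    exact hs.summable
  have hnorm (i : Λ) : ‖v i‖ ≤ √b' := by
    obtain ⟨s, hs, -, hsb⟩ := hv (v i) (hvmem i)
    exact norm_le_sqrt_of_hasSum_inner_sq i hs hsb
  have hthreshold (i : Λ) : α * c ≤ α * d i := mul_le_mul_of_nonneg_left (hd i) hα.le
  let g : Λ → Y → X := fun i y => (soft ⟪y, v i⟫ (α * d i) / κ i) • ubar i
  have hsupp (i : Λ) : support (g i) ⊆ {y | α * c < |⟪y, v i⟫|} := fun y hy =>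
    show α * c < |⟪y, v i⟫| from not_le.1 fun hle => hy <| by
      simp only [g, soft_eq_zero_of_abs_le_s14 (hle.trans (hthreshold i)), zero_div, zero_smul]
  have hg : LocallyFinite fun i => support (g i) :=
    (locallyFinite_setOf_lt_abs_inner hnorm hcoef (by positivity)).subset hsupp
  refine ⟨fun y => ∑ᶠ i, g i y, fun y => ?_, continuous_finsum (fun i => ?_) hg⟩
  · have hfin : HasFiniteSupport fun i => g i y := hg.point_finite y
    have hsum : HasSum (fun i => g i y) (∑' i, g i y) :=
      (summable_of_hasFiniteSupport hfin).hasSum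
    rwa [tsum_eq_finsum hfin] at hsum
  · have hsoft := continuous_soft_s14 ((mul_pos hα hc).le.trans (hthreshold i))
    exact ((hsoft.comp (continuous_id.inner continuous_const)).div_const _).smul continuous_const

theorem bfd_soft_thresholding_wellDefined_continuous
    {X Y : Type*} [NormedAddCommGroup X] [InnerProductSpace ℝ X] [CompleteSpace X]
    [NormedAddCommGroup Y] [InnerProductSpace ℝ Y] [CompleteSpace Y]
    {Λ : Type*} [Countable Λ]
    (A : X →L[ℝ] Y) (u ubar : Λ → X) (v : Λ → Y) (κ : Λ → ℝ)
    (a b : ℝ) (ha : 0 < a) (hab : a ≤ b)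
    -- (u_λ) is a frame of X with dual frame (ubar_λ)
    (hu : ∀ x : X, ∃ s : ℝ, HasSum (fun i => ⟪x, u i⟫ ^ 2) s ∧
      a * ‖x‖ ^ 2 ≤ s ∧ s ≤ b * ‖x‖ ^ 2)
    (hdual : ∀ x : X, HasSum (fun i => ⟪x, u i⟫ • ubar i) x)
    -- (v_λ) is a frame of the closure of ran(A)
    (a' b' : ℝ) (ha' : 0 < a') (hab' : a' ≤ b')
    (hvmem : ∀ i, v i ∈ closure (Set.range A))
    (hv : ∀ y ∈ closure (Set.range A), ∃ s : ℝ, HasSum (fun i => ⟪y, v i⟫ ^ 2) s ∧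
      a' * ‖y‖ ^ 2 ≤ s ∧ s ≤ b' * ‖y‖ ^ 2)
    (hκ : ∀ i, 0 < κ i)
    (hadj : ∀ i, ContinuousLinearMap.adjoint A (v i) = κ i • u i)
    (d : Λ → ℝ) (c : ℝ) (hc : 0 < c) (hd : ∀ i, c ≤ d i)
    (α : ℝ) (hα : 0 < α) :
    ∃ B : Y → X,
      (∀ y : Y, HasSum (fun i => (soft ⟪y, v i⟫ (α * d i) / κ i) • ubar i) (B y)) ∧
      Continuous B :=
  bfd_soft_thresholding_wellDefined_continuous_general A ubar v κ a' b' hvmem hv d c hc hd α hα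
end

section
/- Let A be bounded linear with BFD (U, V, κ), κ_λ > 0, inf d_λ > 0. Suppose y = A x⁺ with Σ_λ d_λ |⟨x⁺,u_λ⟩| < ∞, and let yᵏ ∈ Y satisfy ‖yᵏ − y‖ ≤ δ_k with δ_k → 0. If the regularization parameters α_k satisfy α_k → 0 and δ_k²/α_k → 0, then the BFD soft-thresholding reconstructions B_{α_k}(yᵏ) converge to x⁺ in X. -/
open RealInnerProductSpace Filter

section Helpers

variable {Λ : Type*} {X : Type*} [NormedAddCommGroup X] [NormedSpace ℝ X]

lemma soft_eq (x τ : ℝ) (hτ : 0 ≤ τ) : soft x τ = x - max (-τ) (min τ x) := by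
  rcases lt_trichotomy x 0 with h | h | h
  · rw [soft, Real.sign_of_neg h, abs_of_neg h]
    rw [min_eq_right (by linarith : x ≤ τ)]
    rcases le_total (-τ) x with h1 | h1
    · rw [max_eq_right h1, max_eq_left (by linarith : -x - τ ≤ 0)]; ring
    · rw [max_eq_left h1, max_eq_right (by linarith : (0:ℝ) ≤ -x - τ)]; ring
  · subst h
    rw [soft, Real.sign_zero, min_eq_right (by linarith : (0:ℝ) ≤ τ),
      max_eq_right (by linarith : -τ ≤ (0:ℝ))]
    ring
  · rw [soft, Real.sign_of_pos h, abs_of_pos h]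
    rcases le_total τ x with h1 | h1
    · rw [min_eq_left h1, max_eq_right (by linarith : -τ ≤ τ),
        max_eq_right (by linarith : (0:ℝ) ≤ x - τ)]; ring
    · rw [min_eq_right h1, max_eq_right (by linarith : -τ ≤ x),
        max_eq_left (by linarith : x - τ ≤ 0)]; ring

lemma soft_zero (x : ℝ) : soft x 0 = x := by
  rw [soft_eq x 0 le_rfl]
  rcases le_total x 0 with h | h
  · rw [min_eq_right h, neg_zero, max_eq_left h]; ring
  · rw [min_eq_left h, neg_zero, max_self]; ring

/-- monotone and 1-Lipschitz -/
lemma soft_mono_lip {a b : ℝ} (τ : ℝ) (hτ : 0 ≤ τ) (h : b ≤ a) :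
    0 ≤ soft a τ - soft b τ ∧ soft a τ - soft b τ ≤ a - b := by
  rw [soft_eq a τ hτ, soft_eq b τ hτ]
  simp only [max_def, min_def]
  split_ifs <;> constructor <;> linarith

lemma soft_theta (a b τ : ℝ) (hτ : 0 ≤ τ) :
    ∃ θ : ℝ, 0 ≤ θ ∧ θ ≤ 1 ∧ soft a τ - soft b τ = θ * (a - b) := by
  rcases lt_trichotomy a b with h | h | h
  · obtain ⟨h1, h2⟩ := soft_mono_lip τ hτ h.le
    refine ⟨(soft b τ - soft a τ) / (b - a), div_nonneg h1 (by linarith),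
      (div_le_one (by linarith)).2 h2, ?_⟩
    rw [show a - b = -(b - a) by ring, mul_neg, div_mul_cancel₀ _ (by linarith : b - a ≠ 0)]
    ring
  · exact ⟨0, le_rfl, zero_le_one, by rw [h]; ring⟩
  · obtain ⟨h1, h2⟩ := soft_mono_lip τ hτ h.le
    refine ⟨(soft a τ - soft b τ) / (a - b), div_nonneg h1 (by linarith),
      (div_le_one (by linarith)).2 h2, ?_⟩
    rw [div_mul_cancel₀ _ (by linarith : a - b ≠ 0)]

/-- bias bound: s - soft s τ = θ * s with θ ∈ [0,1] -/
lemma soft_theta' (s τ : ℝ) (hτ : 0 ≤ τ) :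
    ∃ θ : ℝ, 0 ≤ θ ∧ θ ≤ 1 ∧ s - soft s τ = θ * s := by
  rcases lt_trichotomy s 0 with h | h | h
  · have hm : s - soft s τ = max (-τ) (min τ s) := by rw [soft_eq s τ hτ]; ring
    have h1 : max (-τ) (min τ s) ≤ 0 := max_le (by linarith) (min_le_of_right_le h.le)
    have h2 : s ≤ max (-τ) (min τ s) := by
      rw [min_eq_right (by linarith : s ≤ τ)]; exact le_max_right _ _
    refine ⟨(s - soft s τ) / s, ?_, ?_, ?_⟩
    · rw [hm]
      rw [div_nonneg_iff]
      right
      exact ⟨h1, h.le⟩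
    · rw [hm, ← neg_div_neg_eq]
      exact (div_le_one (by linarith : (0:ℝ) < -s)).2 (by linarith)
    · rw [div_mul_cancel₀ _ (ne_of_lt h)]
  · subst h
    refine ⟨0, le_rfl, zero_le_one, ?_⟩
    rw [soft]; simp
  · have hm : s - soft s τ = max (-τ) (min τ s) := by rw [soft_eq s τ hτ]; ring
    have h1 : 0 ≤ max (-τ) (min τ s) := le_max_of_le_right (le_min hτ h.le)
    have h2 : max (-τ) (min τ s) ≤ s := max_le (by linarith) (min_le_right _ _)
    refine ⟨(s - soft s τ) / s, by rw [hm]; exact div_nonneg h1 h.le,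
      by rw [hm]; exact (div_le_one h).2 h2, by field_simp⟩

/-- |soft s τ - s| ≤ τ -/
lemma soft_sub_le (s τ : ℝ) (hτ : 0 ≤ τ) : |soft s τ - s| ≤ τ := by
  rw [soft_eq s τ hτ]
  have h1 : -τ ≤ max (-τ) (min τ s) := le_max_left _ _
  have h2 : max (-τ) (min τ s) ≤ τ := max_le (by linarith) (min_le_left _ _)
  rw [abs_le]
  constructor <;> simp <;> linarith

variable {Λ : Type*} {X : Type*} [NormedAddCommGroup X] [NormedSpace ℝ X]

/-- modulated partial sums bound -/
lemma mod_bound (g : Λ → X) (M : ℝ) :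
    ∀ G : Finset Λ, (∀ H ⊆ G, ‖∑ i ∈ H, g i‖ ≤ M) →
    ∀ (θ : Λ → ℝ) (cc : ℝ), 0 ≤ cc → (∀ i ∈ G, 0 ≤ θ i ∧ θ i ≤ cc) →
    ‖∑ i ∈ G, θ i • g i‖ ≤ cc * M := by
  classical
  intro G
  induction G using Finset.strongInduction with
  | _ G ih =>
    intro hsub θ cc hcc hθ
    have hM : 0 ≤ M := by simpa using hsub ∅ (Finset.empty_subset G)
    rcases G.eq_empty_or_nonempty with rfl | hne
    · simpa using mul_nonneg hcc hM
    · obtain ⟨i₀, hi₀, hmin⟩ := G.exists_min_image θ hne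
      have key : ∑ i ∈ G, θ i • g i
          = θ i₀ • ∑ i ∈ G, g i + ∑ i ∈ G.erase i₀, (θ i - θ i₀) • g i := by
        rw [Finset.sum_erase _ (by simp), Finset.smul_sum, ← Finset.sum_add_distrib]
        refine Finset.sum_congr rfl fun i _ => ?_
        rw [← add_smul, show θ i₀ + (θ i - θ i₀) = θ i by ring]
      rw [key]
      have h1 : ‖θ i₀ • ∑ i ∈ G, g i‖ ≤ θ i₀ * M := by
        rw [norm_smul, Real.norm_eq_abs, abs_of_nonneg (hθ i₀ hi₀).1]
        exact mul_le_mul_of_nonneg_left (hsub G le_rfl) (hθ i₀ hi₀).1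
      have h2 : ‖∑ i ∈ G.erase i₀, (θ i - θ i₀) • g i‖ ≤ (cc - θ i₀) * M := by
        refine ih (G.erase i₀) (G.erase_ssubset hi₀)
          (fun H hH => hsub H (hH.trans (G.erase_subset i₀))) _ _
          (by linarith [(hθ i₀ hi₀).2]) (fun i hi => ?_)
        have hiG := G.erase_subset i₀ hi
        exact ⟨by linarith [hmin i hiG], by linarith [(hθ i hiG).2]⟩
      calc ‖_ + _‖ ≤ θ i₀ * M + (cc - θ i₀) * M := norm_add_le_of_le h1 h2
        _ = cc * M := by ring

/-- bounded partial sums from HasSum -/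
lemma bdd_partial {g : Λ → X} {S : X} (h : HasSum g S) :
    ∃ M, ∀ F : Finset Λ, ‖∑ i ∈ F, g i‖ ≤ M := by
  classical
  have hev : ∀ᶠ F in (atTop : Filter (Finset Λ)), (∑ i ∈ F, g i) ∈ Metric.closedBall S 1 :=
    h (Metric.closedBall_mem_nhds S one_pos)
  obtain ⟨F₀, hF₀⟩ := eventually_atTop.1 hev
  refine ⟨‖S‖ + 1 + ∑ i ∈ F₀, ‖g i‖, fun F => ?_⟩
  have hsd : ∑ i ∈ (F ∪ F₀) \ F, g i = ∑ i ∈ F ∪ F₀, g i - ∑ i ∈ F, g i :=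
    Finset.sum_sdiff_eq_sub Finset.subset_union_left
  have hF : ∑ i ∈ F, g i = ∑ i ∈ F ∪ F₀, g i - ∑ i ∈ (F ∪ F₀) \ F, g i := by
    rw [hsd]; abel
  rw [hF]
  have h1 : ‖∑ i ∈ F ∪ F₀, g i‖ ≤ ‖S‖ + 1 := by
    have := hF₀ (F ∪ F₀) Finset.subset_union_right
    rw [Metric.mem_closedBall, dist_eq_norm] at this
    calc ‖∑ i ∈ F ∪ F₀, g i‖ = ‖(∑ i ∈ F ∪ F₀, g i - S) + S‖ := by rw [sub_add_cancel]
      _ ≤ ‖∑ i ∈ F ∪ F₀, g i - S‖ + ‖S‖ := norm_add_le _ _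
      _ ≤ _ := by linarith
  have h2 : ‖∑ i ∈ (F ∪ F₀) \ F, g i‖ ≤ ∑ i ∈ F₀, ‖g i‖ := by
    refine (norm_sum_le _ _).trans (Finset.sum_le_sum_of_subset_of_nonneg ?_
      (fun i _ _ => norm_nonneg _))
    intro i hi
    simp only [Finset.mem_sdiff, Finset.mem_union] at hi
    tauto
  calc ‖_ - _‖ ≤ ‖∑ i ∈ F ∪ F₀, g i‖ + ‖∑ i ∈ (F ∪ F₀) \ F, g i‖ := norm_sub_le _ _
    _ ≤ _ := by linarith

lemma hasSum_norm_le' {g : Λ → X} {S : X} {M : ℝ} (h : HasSum g S)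
    (hb : ∀ F : Finset Λ, ‖∑ i ∈ F, g i‖ ≤ M) : ‖S‖ ≤ M :=
  le_of_tendsto' h.norm hb

end Helpers

theorem bfd_soft_thresholding_convergence
    {X Y : Type*} [NormedAddCommGroup X] [InnerProductSpace ℝ X] [CompleteSpace X]
    [NormedAddCommGroup Y] [InnerProductSpace ℝ Y] [CompleteSpace Y]
    {Λ : Type*} [Countable Λ]
    (A : X →L[ℝ] Y) (u ubar : Λ → X) (v : Λ → Y) (κ : Λ → ℝ)
    (a b : ℝ) (ha : 0 < a) (hab : a ≤ b)
    -- (u_λ) is a frame of X with dual frame (ubar_λ)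
    (hu : ∀ x : X, ∃ s : ℝ, HasSum (fun i => ⟪x, u i⟫ ^ 2) s ∧
      a * ‖x‖ ^ 2 ≤ s ∧ s ≤ b * ‖x‖ ^ 2)
    (hdual : ∀ x : X, HasSum (fun i => ⟪x, u i⟫ • ubar i) x)
    -- (v_λ) is a frame of the closure of ran(A)
    (a' b' : ℝ) (ha' : 0 < a') (hab' : a' ≤ b')
    (hvmem : ∀ i, v i ∈ closure (Set.range A))
    (hv : ∀ y ∈ closure (Set.range A), ∃ s : ℝ, HasSum (fun i => ⟪y, v i⟫ ^ 2) s ∧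
      a' * ‖y‖ ^ 2 ≤ s ∧ s ≤ b' * ‖y‖ ^ 2)
    (hκ : ∀ i, 0 < κ i)
    (hadj : ∀ i, ContinuousLinearMap.adjoint A (v i) = κ i • u i)
    (d : Λ → ℝ) (c : ℝ) (hc : 0 < c) (hd : ∀ i, c ≤ d i)
    -- the BFD soft-thresholding estimator B_α(y) = Ū ∘ M_κ⁺ ∘ S_{αd} ∘ V*(y)
    (B : ℝ → Y → X)
    (hB : ∀ (α : ℝ) (y : Y),
      HasSum (fun i => (soft ⟪y, v i⟫ (α * d i) / κ i) • ubar i) (B α y))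
    -- exact solution and data
    (xplus : X) (y : Y) (hy : y = A xplus)
    (hsparse : Summable (fun i => d i * |⟪xplus, u i⟫|))
    (yk : ℕ → Y) (δk : ℕ → ℝ) (hδ : ∀ k, ‖yk k - y‖ ≤ δk k)
    (hδ0 : Tendsto δk atTop (nhds 0))
    (αk : ℕ → ℝ) (hαpos : ∀ k, 0 < αk k)
    (hα0 : Tendsto αk atTop (nhds 0))
    (hδα : Tendsto (fun k => (δk k) ^ 2 / αk k) atTop (nhds 0)) :
    Tendsto (fun k => B (αk k) (yk k)) atTop (nhds xplus) := by
  classical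
  set w : Λ → X := fun i => (κ i)⁻¹ • ubar i with hw
  -- rewrite hB in terms of w
  have hB' : ∀ (α : ℝ) (y' : Y),
      HasSum (fun i => soft ⟪y', v i⟫ (α * d i) • w i) (B α y') := by
    intro α y'
    have h1 : (fun i => (soft ⟪y', v i⟫ (α * d i) / κ i) • ubar i)
        = fun i => soft ⟪y', v i⟫ (α * d i) • w i := by
      funext i
      rw [div_eq_mul_inv, mul_smul, hw]
    have := hB α y'
    rwa [h1] at this
  -- the exact solution expansion
  have h_x : HasSum (fun i => ⟪y, v i⟫ • w i) xplus := by
    have key : ∀ i, ⟪xplus, u i⟫ • ubar i = ⟪y, v i⟫ • w i := by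
      intro i
      have h1 : ⟪y, v i⟫ = κ i * ⟪xplus, u i⟫ := by
        rw [hy, ← ContinuousLinearMap.adjoint_inner_right, hadj i, real_inner_smul_right]
      rw [h1, hw, smul_smul,
        show κ i * ⟪xplus, u i⟫ * (κ i)⁻¹ = ⟪xplus, u i⟫ by
          rw [mul_comm (κ i), mul_assoc, mul_inv_cancel₀ (hκ i).ne', mul_one]]
    have := hdual xplus
    rwa [show (fun i => ⟪xplus, u i⟫ • ubar i) = fun i => ⟪y, v i⟫ • w i from
      funext key] at this
  -- hB at α = 0 : the synthesis sums exist for all data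
  have h0 : ∀ y' : Y, HasSum (fun i => ⟪y', v i⟫ • w i) (B 0 y') := by
    intro y'
    have := hB' 0 y'
    simpa [soft_zero] using this
  -- uniform bound on partial synthesis sums via Banach-Steinhaus
  set T : Finset Λ → Y →L[ℝ] X :=
    fun F => ∑ i ∈ F, ContinuousLinearMap.smulRight (innerSL ℝ (v i)) (w i) with hTdef
  have hT : ∀ (F : Finset Λ) (y' : Y), T F y' = ∑ i ∈ F, ⟪y', v i⟫ • w i := by
    intro F y'
    rw [hTdef]
    rw [ContinuousLinearMap.sum_apply]
    refine Finset.sum_congr rfl fun i _ => ?_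
    rw [ContinuousLinearMap.smulRight_apply, innerSL_apply_apply, real_inner_comm]
  obtain ⟨C₀, hC₀⟩ : ∃ C₀, ∀ F : Finset Λ, ‖T F‖ ≤ C₀ := by
    apply banach_steinhaus
    intro y'
    obtain ⟨M, hM⟩ := bdd_partial (h0 y')
    exact ⟨M, fun F => by rw [hT]; exact hM F⟩
  set C := max C₀ 0 with hCdef
  have hCpos : 0 ≤ C := le_max_right _ _
  have hC : ∀ (F : Finset Λ) (y' : Y), ‖∑ i ∈ F, ⟪y', v i⟫ • w i‖ ≤ C * ‖y'‖ := by
    intro F y'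
    rw [← hT]
    calc ‖T F y'‖ ≤ ‖T F‖ * ‖y'‖ := (T F).le_opNorm y'
      _ ≤ C * ‖y'‖ :=
        mul_le_mul_of_nonneg_right ((hC₀ F).trans (le_max_left _ _)) (norm_nonneg _)
  -- main convergence
  rw [Metric.tendsto_atTop]
  intro ε hε
  have hε' : 0 < ε / 4 := by linarith
  obtain ⟨F₀, hF₀⟩ := summable_iff_vanishing_norm.1 h_x.summable (ε / 4) hε'
  set D := ∑ i ∈ F₀, d i * ‖w i‖ with hDdef
  have hD : 0 ≤ D :=
    Finset.sum_nonneg fun i _ => mul_nonneg (hc.le.trans (hd i)) (norm_nonneg _)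
  have ev1 : ∀ᶠ k in atTop, C * δk k < ε / 4 := by
    have h1 : Tendsto (fun k => C * δk k) atTop (nhds (C * 0)) := hδ0.const_mul C
    rw [mul_zero] at h1
    exact h1.eventually_lt_const hε'
  have ev2 : ∀ᶠ k in atTop, αk k * D < ε / 4 := by
    have h1 : Tendsto (fun k => αk k * D) atTop (nhds (0 * D)) := hα0.mul_const D
    rw [zero_mul] at h1
    exact h1.eventually_lt_const hε'
  obtain ⟨N, hN⟩ := eventually_atTop.1 (ev1.and ev2)
  refine ⟨N, fun n hn => ?_⟩
  obtain ⟨h1, h2⟩ := hN n hn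
  -- per-n estimates
  have hτ : ∀ i, 0 ≤ αk n * d i := fun i =>
    (mul_pos (hαpos n) (hc.trans_le (hd i))).le
  choose θq hθq0 hθq1 hθqe using fun i => soft_theta' (⟪y, v i⟫) (αk n * d i) (hτ i)
  choose θp hθp0 hθp1 hθpe using fun i =>
    soft_theta (⟪yk n, v i⟫) (⟪y, v i⟫) (αk n * d i) (hτ i)
  set qr : Λ → X := fun i => (soft ⟪y, v i⟫ (αk n * d i) - ⟪y, v i⟫) • w i with hqrdef
  have qr_eq : ∀ i, qr i = -(θq i • (⟪y, v i⟫ • w i)) := by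
    intro i
    have hcoef : soft ⟪y, v i⟫ (αk n * d i) - ⟪y, v i⟫ = -(θq i * ⟪y, v i⟫) := by
      have := hθqe i; linarith
    simp only [hqrdef, hw, smul_smul]
    rw [← neg_smul]
    congr 1
    rw [hcoef]
    ring
  -- tail bound for qr sums
  have qr_tail : ∀ r : ℝ, 0 < r →
      (∀ t : Finset Λ, (∀ t' : Finset Λ, Disjoint t' F₀ → t' ⊆ t → True) → True) := by
    intro r hr t _; trivial
  have qr_bound : ∀ (G : Finset Λ) (r : ℝ),
      (∀ t : Finset Λ, Disjoint t G → ‖∑ i ∈ t, ⟪y, v i⟫ • w i‖ < r) →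
      ∀ t : Finset Λ, Disjoint t G → ‖∑ i ∈ t, qr i‖ ≤ r := by
    intro G r hG t ht
    have hre : ∑ i ∈ t, qr i = -(∑ i ∈ t, θq i • (⟪y, v i⟫ • w i)) := by
      rw [← Finset.sum_neg_distrib]
      exact Finset.sum_congr rfl fun i _ => qr_eq i
    rw [hre, norm_neg]
    have := mod_bound (fun i => ⟪y, v i⟫ • w i) r t
      (fun H hH => (hG H (Finset.disjoint_of_subset_left hH ht)).le)
      θq 1 zero_le_one (fun i _ => ⟨hθq0 i, hθq1 i⟩)
    simpa using this
  have hqr_sum : Summable qr := by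
    rw [summable_iff_vanishing_norm]
    intro r hr
    obtain ⟨G, hG⟩ := summable_iff_vanishing_norm.1 h_x.summable (r / 2) (by linarith)
    exact ⟨G, fun t ht => (qr_bound G (r / 2) hG t ht).trans_lt (by linarith)⟩
  have hqrn : ∀ F : Finset Λ, ‖∑ i ∈ F, qr i‖ ≤ αk n * D + ε / 4 := by
    intro F
    have hsplit : ∑ i ∈ F \ F₀, qr i + ∑ i ∈ F ∩ F₀, qr i = ∑ i ∈ F, qr i := by
      rw [← Finset.sdiff_inter_self_left F F₀]
      exact Finset.sum_sdiff Finset.inter_subset_left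
    have hA : ‖∑ i ∈ F ∩ F₀, qr i‖ ≤ αk n * D := by
      calc ‖∑ i ∈ F ∩ F₀, qr i‖ ≤ ∑ i ∈ F ∩ F₀, ‖qr i‖ := norm_sum_le _ _
        _ ≤ ∑ i ∈ F ∩ F₀, αk n * (d i * ‖w i‖) := by
            refine Finset.sum_le_sum fun i _ => ?_
            simp only [hqrdef]
            rw [norm_smul, Real.norm_eq_abs]
            calc |soft ⟪y, v i⟫ (αk n * d i) - ⟪y, v i⟫| * ‖w i‖
                ≤ (αk n * d i) * ‖w i‖ :=
                  mul_le_mul_of_nonneg_right (soft_sub_le _ _ (hτ i)) (norm_nonneg _)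
              _ = αk n * (d i * ‖w i‖) := by ring
        _ ≤ ∑ i ∈ F₀, αk n * (d i * ‖w i‖) := by
            refine Finset.sum_le_sum_of_subset_of_nonneg Finset.inter_subset_right
              fun i _ _ => mul_nonneg (hαpos n).le
                (mul_nonneg (hc.le.trans (hd i)) (norm_nonneg _))
        _ = αk n * D := by rw [hDdef, Finset.mul_sum]
    have hB2 : ‖∑ i ∈ F \ F₀, qr i‖ ≤ ε / 4 :=
      qr_bound F₀ (ε / 4) hF₀ (F \ F₀) (Finset.sdiff_disjoint)
    calc ‖∑ i ∈ F, qr i‖ = ‖∑ i ∈ F \ F₀, qr i + ∑ i ∈ F ∩ F₀, qr i‖ := by rw [hsplit]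
      _ ≤ ‖∑ i ∈ F \ F₀, qr i‖ + ‖∑ i ∈ F ∩ F₀, qr i‖ := norm_add_le _ _
      _ ≤ αk n * D + ε / 4 := by linarith
  have hQRle : ‖∑' i, qr i‖ ≤ αk n * D + ε / 4 := hasSum_norm_le' hqr_sum.hasSum hqrn
  -- noise part
  have hE : HasSum (fun i => soft ⟪yk n, v i⟫ (αk n * d i) • w i - ⟪y, v i⟫ • w i)
      (B (αk n) (yk n) - xplus) := (hB' (αk n) (yk n)).sub h_x
  have hP : HasSum
      (fun i => (soft ⟪yk n, v i⟫ (αk n * d i) - soft ⟪y, v i⟫ (αk n * d i)) • w i)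
      (B (αk n) (yk n) - xplus - ∑' i, qr i) := by
    have := hE.sub hqr_sum.hasSum
    have hfun : (fun i =>
        (soft ⟪yk n, v i⟫ (αk n * d i) • w i - ⟪y, v i⟫ • w i) - qr i)
        = fun i => (soft ⟪yk n, v i⟫ (αk n * d i) - soft ⟪y, v i⟫ (αk n * d i)) • w i := by
      funext i
      simp only [hqrdef]
      rw [← sub_smul, ← sub_smul]
      congr 1
      ring
    rwa [hfun] at this
  have hPle : ‖B (αk n) (yk n) - xplus - ∑' i, qr i‖ ≤ C * ‖yk n - y‖ := by
    refine hasSum_norm_le' hP fun F => ?_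
    have hre : ∑ i ∈ F, (soft ⟪yk n, v i⟫ (αk n * d i) - soft ⟪y, v i⟫ (αk n * d i)) • w i
        = ∑ i ∈ F, θp i • (⟪yk n - y, v i⟫ • w i) := by
      refine Finset.sum_congr rfl fun i _ => ?_
      rw [hθpe i]
      simp only [hw, smul_smul, inner_sub_left]
      congr 1
      ring
    rw [hre]
    have := mod_bound (fun i => ⟪yk n - y, v i⟫ • w i) (C * ‖yk n - y‖) F
      (fun H _ => hC H (yk n - y)) θp 1 zero_le_one (fun i _ => ⟨hθp0 i, hθp1 i⟩)
    simpa using this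
  -- combine
  have hCd : C * ‖yk n - y‖ ≤ C * δk n := mul_le_mul_of_nonneg_left (hδ n) hCpos
  have : dist (B (αk n) (yk n)) xplus ≤ C * δk n + (αk n * D + ε / 4) := by
    rw [dist_eq_norm]
    calc ‖B (αk n) (yk n) - xplus‖
        = ‖(B (αk n) (yk n) - xplus - ∑' i, qr i) + ∑' i, qr i‖ := by rw [sub_add_cancel]
      _ ≤ ‖B (αk n) (yk n) - xplus - ∑' i, qr i‖ + ‖∑' i, qr i‖ := norm_add_le _ _
      _ ≤ C * δk n + (αk n * D + ε / 4) := by linarith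
  linarith
end
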